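/- arXiv:1510.08132 — 5 statements merged into one kernel-verified Lean document; each statement's English description precedes it below -/
import Mathlib

section
/- Let B be a Blaschke product of degree n with B(0) = 0 and let γ be on the unit circle. Then there exist points ζ_1,...,ζ_n on the unit circle and strictly positive reals c_1,...,c_n such that 1/(1 - conj(γ) B(z)) = Σ_{k=1}^n c_k/(1 - conj(ζ_k) z) for all z in the open unit disk; moreover c_k = B(ζ_k)/(ζ_k B'(ζ_k)). -/
/-!
Write `B = P / Q` with `P = c ∏ (a_k - X)` and `Q = ∏ (1 - conj a_k X)`. Since some `a_k = 0`,
`deg Q < n = deg P`, so the solutions of `B = γ` are the `n` roots of `R = P - γ Q`. Comparing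
`|z - a|` with `|1 - conj a z|` puts these roots on the unit circle, where the logarithmic
derivative gives `ζ B'(ζ) / B(ζ) = ∑ (1 - |a_k|²) / |ζ - a_k|² > 0`. As `B'(ζ) Q(ζ) = R'(ζ)`,
the roots are simple, and the expansion is the partial fraction decomposition of
`1 / (1 - conj γ B) = -γ Q / R`, in which `1 / (z - ζ)` has coefficient
`-γ Q(ζ) / R'(ζ) = -γ / B'(ζ)`.
-/

open Polynomial Finset ComplexConjugate

theorem Finset.prod_lt_prod_of_nonempty_of_nonneg {ι R : Type*} [CommMonoidWithZero R]
    [PartialOrder R] [ZeroLEOneClass R] [PosMulStrictMono R] [Nontrivial R]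
    {s : Finset ι} {f g : ι → R} (hf : ∀ i ∈ s, 0 ≤ f i) (hfg : ∀ i ∈ s, f i < g i)
    (hs : s.Nonempty) : ∏ i ∈ s, f i < ∏ i ∈ s, g i := by
  by_cases h0 : ∃ i ∈ s, f i = 0
  · obtain ⟨i, hi, hfi⟩ := h0
    rw [prod_eq_zero hi hfi]
    exact prod_pos fun j hj => (hf j hj).trans_lt (hfg j hj)
  · push Not at h0
    exact prod_lt_prod_of_nonempty (fun i hi => (hf i hi).lt_of_ne (h0 i hi).symm) hfg hs

theorem Finset.exists_sum_eq_sum_of_card_eq {α ι M : Type*} [Fintype ι] [AddCommMonoid M]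
    (s : Finset α) (hs : #s = Fintype.card ι) :
    ∃ v : ι → α, (∀ i, v i ∈ s) ∧ ∀ f : α → M, ∑ x ∈ s, f x = ∑ i, f (v i) := by
  let e : ι ≃ s := Fintype.equivOfCardEq (by rw [Fintype.card_coe, hs])
  exact ⟨fun i => e i, fun i => (e i).2, fun f => by rw [← sum_coe_sort, ← e.sum_comp]⟩

namespace Polynomial

variable {K : Type*} [Field K]

theorem nodup_roots_of_eval_derivative_ne_zero {p : K[X]}
    (h : ∀ x, p.IsRoot x → (derivative p).eval x ≠ 0) : p.roots.Nodup := by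
  classical
  rcases eq_or_ne p 0 with rfl | hp
  · simp
  refine Multiset.nodup_iff_count_le_one.2 fun x => ?_
  rw [count_roots]
  by_contra! hx
  obtain ⟨hroot, hder⟩ := (one_lt_rootMultiplicity_iff_isRoot hp).1 hx
  exact h x hroot hder

theorem eval_div_eq_sum_roots [DecidableEq K] {Q R : K[X]} (hR : R.Splits) (hnd : R.roots.Nodup)
    (hdeg : Q.degree < R.degree) {x : K} (hx : R.eval x ≠ 0) :
    Q.eval x / R.eval x =
      ∑ ζ ∈ R.roots.toFinset, Q.eval ζ / ((derivative R).eval ζ * (x - ζ)) := by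
  set s := R.roots.toFinset
  set l := R.leadingCoeff
  have hl : l ≠ 0 := leadingCoeff_ne_zero.2 fun h => hx (by simp [h])
  have hRs : R = C l * Lagrange.nodal s id := by
    conv_lhs => rw [hR.eq_prod_roots]
    rw [Lagrange.nodal, prod_eq_multiset_prod, Multiset.toFinset_val,
      Multiset.dedup_eq_self.2 hnd]
    rfl
  have hcard : (#s : WithBot ℕ) = R.degree := by
    rw [Multiset.toFinset_card_of_nodup hnd, ← hR.natDegree_eq_card_roots,
      degree_eq_natDegree (leadingCoeff_ne_zero.1 hl)]
  have hxs : ∀ ζ ∈ s, x ≠ ζ := by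
    rintro ζ hζ rfl
    exact hx (isRoot_of_mem_roots (Multiset.mem_toFinset.1 hζ))
  have hnodal : (Lagrange.nodal s id).eval x ≠ 0 := Lagrange.eval_nodal_not_at_node hxs
  have hQx : Q.eval x = (Lagrange.nodal s id).eval x *
      ∑ ζ ∈ s, Lagrange.nodalWeight s id ζ * (x - ζ)⁻¹ * Q.eval ζ := by
    conv_lhs => rw [Lagrange.eq_interpolate (f := Q) (Set.injOn_id _) (hcard ▸ hdeg)]
    exact Lagrange.eval_interpolate_not_at_node _ hxs
  have hRx : R.eval x = (Lagrange.nodal s id).eval x * l := by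
    rw [hRs, eval_mul, eval_C, mul_comm]
  rw [hQx, hRx, mul_div_mul_left _ _ hnodal, sum_div]
  refine sum_congr rfl fun ζ hζ => ?_
  rw [hRs, derivative_C_mul, eval_mul, eval_C, Lagrange.nodalWeight_eq_eval_derivative_nodal hζ]
  simp only [id]
  field_simp

theorem deriv_eval_div_eval_mul_eval {𝕜 : Type*} [NontriviallyNormedField 𝕜]
    {P Q : 𝕜[X]} {γ x : 𝕜} (hQ : Q.eval x ≠ 0) (hPQ : P.eval x = γ * Q.eval x) :
    deriv (fun z => P.eval z / Q.eval z) x * Q.eval x = (derivative (P - C γ * Q)).eval x := by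
  rw [((P.hasDerivAt x).fun_div (Q.hasDerivAt x) hQ).deriv]
  simp only [derivative_sub, derivative_C_mul, eval_sub, eval_mul, eval_C]
  field_simp
  rw [hPQ]
  ring

end Polynomial

noncomputable section Blaschke

variable {ι : Type*} [Fintype ι]

def blaschkeFactor (a z : ℂ) : ℂ := (a - z) / (1 - conj a * z)

def blaschke (c : ℂ) (a : ι → ℂ) (z : ℂ) : ℂ := c * ∏ k, blaschkeFactor (a k) z

def blaschkeNum (c : ℂ) (a : ι → ℂ) : ℂ[X] := C c * ∏ k, (C (a k) - X)

def blaschkeDen (a : ι → ℂ) : ℂ[X] := ∏ k, (1 - C (conj (a k)) * X)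

theorem eval_blaschkeNum (c : ℂ) (a : ι → ℂ) (z : ℂ) :
    (blaschkeNum c a).eval z = c * ∏ k, (a k - z) := by
  simp [blaschkeNum, eval_prod]

theorem eval_blaschkeDen (a : ι → ℂ) (z : ℂ) :
    (blaschkeDen a).eval z = ∏ k, (1 - conj (a k) * z) := by
  simp [blaschkeDen, eval_prod]

theorem blaschke_eq_eval_div (c : ℂ) (a : ι → ℂ) (z : ℂ) :
    blaschke c a z = (blaschkeNum c a).eval z / (blaschkeDen a).eval z := by
  simp only [blaschke, blaschkeFactor, eval_blaschkeNum, eval_blaschkeDen, prod_div_distrib,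
    mul_div_assoc]

theorem eval_blaschkeDen_ne_zero {a : ι → ℂ} (ha : ∀ k, ‖a k‖ < 1) {z : ℂ} (hz : ‖z‖ ≤ 1) :
    (blaschkeDen a).eval z ≠ 0 := by
  rw [eval_blaschkeDen, prod_ne_zero_iff]
  intro k _ h
  have : ‖conj (a k) * z‖ < 1 := by
    rw [norm_mul, RCLike.norm_conj]
    exact (mul_le_of_le_one_right (norm_nonneg _) hz).trans_lt (ha k)
  rw [← sub_eq_zero.1 h, norm_one] at this
  exact lt_irrefl _ this

theorem degree_blaschkeNum {c : ℂ} (hc : c ≠ 0) (a : ι → ℂ) :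
    (blaschkeNum c a).degree = Fintype.card ι := by
  have hfactor : ∀ k, (C (a k) - X).degree = 1 := fun k => by
    rw [← neg_sub, degree_neg, degree_X_sub_C]
  simp [blaschkeNum, degree_C_mul hc, degree_prod, hfactor]

theorem degree_blaschkeDen_lt {a : ι → ℂ} (h0 : ∃ k, a k = 0) :
    (blaschkeDen a).degree < Fintype.card ι := by
  classical
  obtain ⟨k₀, hk₀⟩ := h0
  have hfactor : ∀ k, (1 - C (conj (a k)) * X).natDegree ≤ 1 := fun k =>
    (natDegree_sub_le _ _).trans (max_le (by simp) (natDegree_C_mul_le _ _ |>.trans natDegree_X_le))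
  have hnat : (blaschkeDen a).natDegree < Fintype.card ι := by
    rw [blaschkeDen, ← mul_prod_erase _ _ (mem_univ k₀), hk₀, map_zero, map_zero, zero_mul,
      sub_zero, one_mul]
    calc _ ≤ ∑ k ∈ univ.erase k₀, (1 - C (conj (a k)) * X).natDegree := natDegree_prod_le _ _
      _ ≤ ∑ k ∈ univ.erase k₀, 1 := by gcongr with k; exact hfactor k
      _ < Fintype.card ι := by simp [Fintype.card_pos_iff.2 ⟨k₀⟩]
  exact degree_le_natDegree.trans_lt (by exact_mod_cast hnat)

theorem norm_one_sub_conj_mul_sq_sub_norm_sub_sq (a z : ℂ) :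
    ‖1 - conj a * z‖ ^ 2 - ‖a - z‖ ^ 2 = (1 - ‖a‖ ^ 2) * (1 - ‖z‖ ^ 2) := by
  simp only [Complex.sq_norm, Complex.normSq_apply, Complex.sub_re, Complex.sub_im,
    Complex.mul_re, Complex.mul_im, Complex.one_re, Complex.one_im, Complex.conj_re,
    Complex.conj_im]
  ring

theorem norm_eq_one_of_prod_norm_sub_eq [Nonempty ι] {a : ι → ℂ} (ha : ∀ k, ‖a k‖ < 1) {z : ℂ}
    (h : ∏ k, ‖a k - z‖ = ∏ k, ‖1 - conj (a k) * z‖) : ‖z‖ = 1 := by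
  have hgap := fun k => norm_one_sub_conj_mul_sq_sub_norm_sub_sq (a k) z
  have ha2 : ∀ k, 0 < 1 - ‖a k‖ ^ 2 := fun k =>
    sub_pos.2 (pow_lt_one₀ (norm_nonneg _) (ha k) two_ne_zero)
  rcases lt_trichotomy ‖z‖ 1 with hz | hz | hz
  · have hz2 : 0 < 1 - ‖z‖ ^ 2 := sub_pos.2 (pow_lt_one₀ (norm_nonneg _) hz two_ne_zero)
    refine absurd h (prod_lt_prod_of_nonempty_of_nonneg (fun k _ => norm_nonneg _)
      (fun k _ => lt_of_pow_lt_pow_left₀ 2 (norm_nonneg _) ?_) univ_nonempty).ne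
    nlinarith [hgap k, mul_pos (ha2 k) hz2]
  · exact hz
  · have hz2 : 1 - ‖z‖ ^ 2 < 0 := sub_neg.2 (one_lt_pow₀ hz two_ne_zero)
    refine absurd h (prod_lt_prod_of_nonempty_of_nonneg (fun k _ => norm_nonneg _)
      (fun k _ => lt_of_pow_lt_pow_left₀ 2 (norm_nonneg _) ?_) univ_nonempty).ne'
    nlinarith [hgap k, mul_neg_of_pos_of_neg (ha2 k) hz2]

theorem one_sub_conj_mul_eq_mul_conj_sub (a : ℂ) {z : ℂ} (hz : ‖z‖ = 1) :
    1 - conj a * z = z * conj (z - a) := by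
  have hzz : z * conj z = 1 := by rw [Complex.mul_conj', hz]; norm_num
  rw [map_sub]
  linear_combination -hzz

theorem one_sub_conj_mul_ne_zero {a z : ℂ} (hz : ‖z‖ = 1) (haz : a ≠ z) :
    1 - conj a * z ≠ 0 := by
  rw [one_sub_conj_mul_eq_mul_conj_sub a hz]
  exact mul_ne_zero (norm_ne_zero_iff.1 (hz ▸ one_ne_zero))
    ((_root_.map_ne_zero _).2 (sub_ne_zero.2 haz.symm))

theorem hasDerivAt_blaschkeFactor {a z : ℂ} (hz : 1 - conj a * z ≠ 0) :
    HasDerivAt (blaschkeFactor a) ((‖a‖ ^ 2 - 1 : ℂ) / (1 - conj a * z) ^ 2) z := by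
  refine (((hasDerivAt_id z).const_sub a).fun_div
    (((hasDerivAt_id z).const_mul (conj a)).const_sub 1) hz).congr_deriv ?_
  rw [← Complex.mul_conj']
  simp only [id]
  ring

theorem mul_logDeriv_blaschkeFactor {a z : ℂ} (hz : ‖z‖ = 1) (haz : a ≠ z) :
    z * logDeriv (blaschkeFactor a) z = ((1 - ‖a‖ ^ 2) / ‖z - a‖ ^ 2 : ℝ) := by
  have hza : z - a ≠ 0 := sub_ne_zero.2 haz.symm
  have hz0 : z ≠ 0 := norm_ne_zero_iff.1 (hz ▸ one_ne_zero)
  rw [logDeriv_apply, (hasDerivAt_blaschkeFactor (one_sub_conj_mul_ne_zero hz haz)).deriv,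
    blaschkeFactor]
  push_cast
  rw [← Complex.mul_conj', ← Complex.mul_conj', one_sub_conj_mul_eq_mul_conj_sub a hz]
  have hza' : conj (z - a) ≠ 0 := (_root_.map_ne_zero _).2 hza
  field_simp
  ring

theorem mul_logDeriv_blaschke {c : ℂ} (hc : c ≠ 0) {a : ι → ℂ} {z : ℂ} (hz : ‖z‖ = 1)
    (ha : ∀ k, a k ≠ z) :
    z * logDeriv (blaschke c a) z = ((∑ k, (1 - ‖a k‖ ^ 2) / ‖z - a k‖ ^ 2 : ℝ) : ℂ) := by
  have hden := fun k => one_sub_conj_mul_ne_zero hz (ha k)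
  change z * logDeriv (fun w => c * ∏ k ∈ univ, blaschkeFactor (a k) w) z = _
  rw [logDeriv_const_mul _ _ hc,
    logDeriv_prod (f := fun k => blaschkeFactor (a k))
      (fun k _ => div_ne_zero (sub_ne_zero.2 (ha k)) (hden k))
      (fun k _ => (hasDerivAt_blaschkeFactor (hden k)).differentiableAt), mul_sum,
    Complex.ofReal_sum]
  exact sum_congr rfl fun k _ => mul_logDeriv_blaschkeFactor hz (ha k)

theorem exists_pos_eq_blaschke_div_mul_deriv [Nonempty ι] {c : ℂ} (hc : c ≠ 0) {a : ι → ℂ}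
    (ha : ∀ k, ‖a k‖ < 1) {z : ℂ} (hz : ‖z‖ = 1) :
    ∃ r : ℝ, 0 < r ∧ (r : ℂ) = blaschke c a z / (z * deriv (blaschke c a) z) := by
  have hne : ∀ k, a k ≠ z := fun k h => (ha k).ne (by rw [h, hz])
  refine ⟨(∑ k, (1 - ‖a k‖ ^ 2) / ‖z - a k‖ ^ 2)⁻¹, inv_pos.2 (sum_pos (fun k _ => ?_)
    univ_nonempty), ?_⟩
  · exact div_pos (sub_pos.2 (pow_lt_one₀ (norm_nonneg _) (ha k) two_ne_zero))
      (pow_pos (norm_pos_iff.2 (sub_ne_zero.2 (hne k).symm)) 2)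
  · rw [Complex.ofReal_inv, ← mul_logDeriv_blaschke hc hz hne, logDeriv_apply, mul_div_assoc',
      inv_div]

theorem deriv_blaschke_ne_zero [Nonempty ι] {c : ℂ} (hc : c ≠ 0) {a : ι → ℂ}
    (ha : ∀ k, ‖a k‖ < 1) {z : ℂ} (hz : ‖z‖ = 1) : deriv (blaschke c a) z ≠ 0 := by
  obtain ⟨r, hr, hr'⟩ := exists_pos_eq_blaschke_div_mul_deriv hc ha hz
  intro h
  rw [h, mul_zero, div_zero, Complex.ofReal_eq_zero] at hr'
  exact hr.ne' hr'

/-- Numerator of `blaschke c a - γ`: its roots are the solutions of `B(ζ) = γ`. -/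
def blaschkeLevel (c γ : ℂ) (a : ι → ℂ) : ℂ[X] := blaschkeNum c a - C γ * blaschkeDen a

section Level

variable {c γ : ℂ} {a : ι → ℂ} {ζ : ℂ}

theorem eval_blaschkeNum_of_isRoot (h : (blaschkeLevel c γ a).IsRoot ζ) :
    (blaschkeNum c a).eval ζ = γ * (blaschkeDen a).eval ζ := by
  rw [IsRoot, blaschkeLevel, eval_sub, eval_mul, eval_C, sub_eq_zero] at h
  exact h

theorem degree_blaschkeLevel (hc : c ≠ 0) (h0 : ∃ k, a k = 0) :
    (blaschkeLevel c γ a).degree = Fintype.card ι := by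
  have hlt : (C γ * blaschkeDen a).degree < (blaschkeNum c a).degree := by
    rw [degree_blaschkeNum hc, C_mul']
    exact (degree_smul_le _ _).trans_lt (degree_blaschkeDen_lt h0)
  rw [blaschkeLevel, degree_sub_eq_left_of_degree_lt hlt, degree_blaschkeNum hc]

theorem norm_eq_one_of_isRoot [Nonempty ι] (hc : ‖c‖ = 1) (hγ : ‖γ‖ = 1)
    (ha : ∀ k, ‖a k‖ < 1) (h : (blaschkeLevel c γ a).IsRoot ζ) : ‖ζ‖ = 1 := by
  refine norm_eq_one_of_prod_norm_sub_eq ha ?_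
  simpa [eval_blaschkeNum, eval_blaschkeDen, norm_prod, hc, hγ] using
    congrArg norm (eval_blaschkeNum_of_isRoot h)

theorem blaschke_eq_of_isRoot (hQ : (blaschkeDen a).eval ζ ≠ 0)
    (h : (blaschkeLevel c γ a).IsRoot ζ) : blaschke c a ζ = γ := by
  rw [blaschke_eq_eval_div, eval_blaschkeNum_of_isRoot h, mul_div_cancel_right₀ _ hQ]

theorem deriv_blaschke_mul_eval_blaschkeDen (hQ : (blaschkeDen a).eval ζ ≠ 0)
    (h : (blaschkeLevel c γ a).IsRoot ζ) :
    deriv (blaschke c a) ζ * (blaschkeDen a).eval ζ =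
      (derivative (blaschkeLevel c γ a)).eval ζ := by
  rw [funext (blaschke_eq_eval_div c a)]
  exact deriv_eval_div_eval_mul_eval hQ (eval_blaschkeNum_of_isRoot h)

theorem nodup_roots_blaschkeLevel [Nonempty ι] (hc : ‖c‖ = 1) (hγ : ‖γ‖ = 1)
    (ha : ∀ k, ‖a k‖ < 1) : (blaschkeLevel c γ a).roots.Nodup := by
  refine nodup_roots_of_eval_derivative_ne_zero fun ζ hζ => ?_
  have hζ1 := norm_eq_one_of_isRoot hc hγ ha hζ
  have hQ := eval_blaschkeDen_ne_zero ha hζ1.le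
  rw [← deriv_blaschke_mul_eval_blaschkeDen hQ hζ]
  exact mul_ne_zero (deriv_blaschke_ne_zero (norm_ne_zero_iff.1 (hc ▸ one_ne_zero)) ha hζ1) hQ

theorem one_div_one_sub_conj_mul_blaschke (hγ : ‖γ‖ = 1) {z : ℂ}
    (hQ : (blaschkeDen a).eval z ≠ 0) :
    1 / (1 - conj γ * blaschke c a z) =
      -γ * ((blaschkeDen a).eval z / (blaschkeLevel c γ a).eval z) := by
  have hγγ : conj γ * γ = 1 := by rw [mul_comm, Complex.mul_conj', hγ]; norm_num
  rw [blaschke_eq_eval_div, blaschkeLevel, eval_sub, eval_mul, eval_C]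
  set P := (blaschkeNum c a).eval z
  set Q := (blaschkeDen a).eval z
  have hlhs : 1 - conj γ * (P / Q) = -conj γ * (P - γ * Q) / Q := by
    field_simp
    linear_combination -Q * hγγ
  rw [hlhs, one_div_div, mul_comm (-conj γ), ← div_div, div_eq_mul_inv _ (-conj γ), inv_neg,
    inv_eq_of_mul_eq_one_right hγγ, mul_comm]

theorem neg_mul_div_eq_blaschke_div_mul_deriv [Nonempty ι] (hc : ‖c‖ = 1) (hγ : ‖γ‖ = 1)
    (ha : ∀ k, ‖a k‖ < 1) (h : (blaschkeLevel c γ a).IsRoot ζ) {z : ℂ} (hz : z ≠ ζ) :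
    -γ * ((blaschkeDen a).eval ζ / ((derivative (blaschkeLevel c γ a)).eval ζ * (z - ζ))) =
      blaschke c a ζ / (ζ * deriv (blaschke c a) ζ) / (1 - conj ζ * z) := by
  have hζ1 := norm_eq_one_of_isRoot hc hγ ha h
  have hQ := eval_blaschkeDen_ne_zero ha hζ1.le
  have hd := deriv_blaschke_ne_zero (norm_ne_zero_iff.1 (hc ▸ one_ne_zero)) ha hζ1
  have hζζ : ζ * conj ζ = 1 := by rw [Complex.mul_conj', hζ1]; norm_num
  have hζ0 : ζ ≠ 0 := left_ne_zero_of_mul_eq_one hζζ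
  have hζ0' : conj ζ ≠ 0 := right_ne_zero_of_mul_eq_one hζζ
  have hζz : ζ - z ≠ 0 := sub_ne_zero.2 hz.symm
  have hden : 1 - conj ζ * z = conj ζ * (ζ - z) := by linear_combination -hζζ
  rw [blaschke_eq_of_isRoot hQ h, ← deriv_blaschke_mul_eval_blaschkeDen hQ h, hden,
    ← neg_sub ζ z]
  field_simp
  rw [mul_assoc, hζζ, mul_one]

theorem exists_one_div_one_sub_conj_mul_blaschke_eq_sum (hc : ‖c‖ = 1) (hγ : ‖γ‖ = 1)
    (ha : ∀ k, ‖a k‖ < 1) (h0 : ∃ k, a k = 0) :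
    ∃ ζ : ι → ℂ, (∀ k, ‖ζ k‖ = 1) ∧ ∀ z, ‖z‖ < 1 →
      1 / (1 - conj γ * blaschke c a z) =
        ∑ k, blaschke c a (ζ k) / (ζ k * deriv (blaschke c a) (ζ k)) / (1 - conj (ζ k) * z) := by
  classical
  have : Nonempty ι := h0.nonempty
  set R := blaschkeLevel c γ a
  have hdeg : R.degree = Fintype.card ι :=
    degree_blaschkeLevel (norm_ne_zero_iff.1 (hc ▸ one_ne_zero)) h0
  have hnd : R.roots.Nodup := nodup_roots_blaschkeLevel hc hγ ha
  have hcard : #R.roots.toFinset = Fintype.card ι := by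
    rw [Multiset.toFinset_card_of_nodup hnd, ← (IsAlgClosed.splits R).natDegree_eq_card_roots,
      natDegree_eq_of_degree_eq_some hdeg]
  obtain ⟨ζ, hζ, hsum⟩ := R.roots.toFinset.exists_sum_eq_sum_of_card_eq (M := ℂ) hcard
  have hζR : ∀ k, R.IsRoot (ζ k) := fun k => isRoot_of_mem_roots (Multiset.mem_toFinset.1 (hζ k))
  refine ⟨ζ, fun k => norm_eq_one_of_isRoot hc hγ ha (hζR k), fun z hz => ?_⟩
  rw [one_div_one_sub_conj_mul_blaschke hγ (eval_blaschkeDen_ne_zero ha hz.le),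
    eval_div_eq_sum_roots (IsAlgClosed.splits R) hnd (hdeg ▸ degree_blaschkeDen_lt h0)
      (fun h => (norm_eq_one_of_isRoot hc hγ ha h).not_lt hz), hsum, mul_sum]
  refine sum_congr rfl fun k _ => neg_mul_div_eq_blaschke_div_mul_deriv hc hγ ha (hζR k) ?_
  rintro rfl
  exact (norm_eq_one_of_isRoot hc hγ ha (hζR k)).not_lt hz

end Level

end Blaschke

/-- Lemma 2.3 (partial-fraction expansion): if `B` is a Blaschke product of degree `n`
with `B(0) = 0` and `γ` is on the unit circle, then there are points `ζ k` on the unit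
circle and strictly positive reals `c k` with `c k = B(ζ k)/(ζ k B'(ζ k))` such that
`1/(1 - conj γ · B z) = ∑ c k / (1 - conj (ζ k) · z)` on the open unit disk. -/
theorem stmt2 (n : ℕ) (a : Fin n → ℂ) (ha : ∀ k, ‖a k‖ < 1)
    (c : ℂ) (hc : ‖c‖ = 1)
    (B : ℂ → ℂ)
    (hB : ∀ z, B z = c * ∏ k, (a k - z) / (1 - (starRingEnd ℂ) (a k) * z))
    (hB0 : ∃ k, a k = 0)
    (γ : ℂ) (hγ : ‖γ‖ = 1) :
    ∃ (ζ : Fin n → ℂ) (cc : Fin n → ℝ),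
      (∀ k, ‖ζ k‖ = 1) ∧ (∀ k, 0 < cc k) ∧
      (∀ k, (cc k : ℂ) = B (ζ k) / (ζ k * deriv B (ζ k))) ∧
      ∀ z ∈ Metric.ball (0 : ℂ) 1,
        1 / (1 - (starRingEnd ℂ) γ * B z) =
          ∑ k, (cc k : ℂ) / (1 - (starRingEnd ℂ) (ζ k) * z) := by
  obtain rfl : B = blaschke c a := funext hB
  have : Nonempty (Fin n) := hB0.nonempty
  obtain ⟨ζ, hζ, hsum⟩ := exists_one_div_one_sub_conj_mul_blaschke_eq_sum hc hγ ha hB0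
  choose cc hcc_pos hcc using fun k =>
    exists_pos_eq_blaschke_div_mul_deriv (norm_ne_zero_iff.1 (hc ▸ one_ne_zero)) ha (hζ k)
  refine ⟨ζ, cc, hζ, hcc_pos, hcc, fun z hz => ?_⟩
  simp only [hsum z (mem_ball_zero_iff.1 hz), hcc]
end

section
/- Let T be a bounded operator on a complex Hilbert space H with numerical radius w(T) ≤ 1, and let x ∈ H with ‖x‖ ≤ 1. Then ‖Tx‖² ≤ 2 + 2√(1 - |⟨Tx,x⟩|²). -/
/-!
Write `T = A + i B` with `A = ℜ T` and `B = ℑ T` self-adjoint. Since `⟪y, A y⟫ = Re ⟪y, T y⟫`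
and `⟪y, B y⟫ = Im ⟪y, T y⟫`, the bound on the numerical range gives `‖A‖, ‖B‖ ≤ 1`. After
rotating `T` we may assume `⟪x, T x⟫ = r` is real, so `⟪x, A x⟫ = r` and `⟪x, B x⟫ = 0`. Then
`‖T x‖² = ‖A x‖² + ‖B x‖² + 2 Re ⟪A x, i B x⟫ ≤ 2 + 2 ‖A x - r x‖ ‖B x‖`, and
`‖A x - r x‖² = ‖A x‖² - 2 r² + r² ‖x‖² ≤ 1 - r²`.

Real and imaginary parts need the adjoint, hence completeness; in general one passes to the
compression of `T` to the finite-dimensional space spanned by `x` and `T x`.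
-/

open scoped InnerProductSpace ComplexStarModule
open Complex

theorem norm_add_I_smul_sq_le {H : Type*} [NormedAddCommGroup H] [InnerProductSpace ℂ H]
    {a b x : H} {r : ℝ} (ha : ‖a‖ ≤ 1) (hb : ‖b‖ ≤ 1) (hx : ‖x‖ ≤ 1)
    (hxa : ⟪x, a⟫_ℂ = r) (hxb : ⟪x, b⟫_ℂ = 0) :
    ‖a + I • b‖ ^ 2 ≤ 2 + 2 * √(1 - r ^ 2) := by
  have hdist : ‖a - (r : ℂ) • x‖ ^ 2 ≤ 1 - r ^ 2 := by
    rw [@norm_sub_sq ℂ, inner_smul_right, ← inner_conj_symm, hxa, norm_smul, mul_pow]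
    simp only [conj_ofReal, ← ofReal_mul, RCLike.re_to_complex, ofReal_re, norm_real,
      Real.norm_eq_abs, sq_abs]
    have hx2 : r ^ 2 * ‖x‖ ^ 2 ≤ r ^ 2 :=
      mul_le_of_le_one_right (sq_nonneg r) (pow_le_one₀ (norm_nonneg x) hx)
    nlinarith [pow_le_one₀ (n := 2) (norm_nonneg a) ha]
  have hab : ⟪a, b⟫_ℂ = ⟪a - (r : ℂ) • x, b⟫_ℂ := by
    rw [inner_sub_left, inner_smul_left, hxb, mul_zero, sub_zero]
  have hcross : ‖⟪a, b⟫_ℂ‖ ≤ √(1 - r ^ 2) := calc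
    ‖⟪a, b⟫_ℂ‖ ≤ ‖a - (r : ℂ) • x‖ * ‖b‖ := hab ▸ norm_inner_le_norm _ _
    _ ≤ √(1 - r ^ 2) * 1 := by gcongr; exact Real.le_sqrt_of_sq_le hdist
    _ = √(1 - r ^ 2) := mul_one _
  have hre : (I * ⟪a, b⟫_ℂ).re ≤ √(1 - r ^ 2) :=
    (re_le_norm _).trans (by rwa [norm_mul, norm_I, one_mul])
  rw [@norm_add_sq ℂ, inner_smul_right, norm_smul, norm_I, one_mul, RCLike.re_to_complex]
  nlinarith [norm_nonneg a, norm_nonneg b]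

section Compression

variable {𝕜 E : Type*} [RCLike 𝕜] [NormedAddCommGroup E] [InnerProductSpace 𝕜 E]

noncomputable def compression (K : Submodule 𝕜 E) [K.HasOrthogonalProjection] (T : E →L[𝕜] E) :
    K →L[𝕜] K :=
  K.orthogonalProjectionOnto ∘L T ∘L K.subtypeL

variable (K : Submodule 𝕜 E) [K.HasOrthogonalProjection] (T : E →L[𝕜] E)

theorem inner_compression_apply (y z : K) : ⟪y, compression K T z⟫_𝕜 = ⟪(y : E), T z⟫_𝕜 :=
  Submodule.inner_orthogonalProjectionOnto_eq_of_mem_left y _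

theorem coe_compression_apply_of_mem {y : K} (h : T y ∈ K) : (compression K T y : E) = T y :=
  congrArg Subtype.val (K.orthogonalProjectionOnto_mem_subspace_eq_self ⟨T y, h⟩)

end Compression

section RealAndImaginaryParts

variable {H : Type*} [NormedAddCommGroup H] [InnerProductSpace ℂ H] [CompleteSpace H]

theorem inner_realPart_apply_self (T : H →L[ℂ] H) (x : H) :
    ⟪x, (ℜ T : H →L[ℂ] H) x⟫_ℂ = (⟪x, T x⟫_ℂ).re := by
  rw [realPart_apply_coe, ContinuousLinearMap.star_eq_adjoint, smul_apply, add_apply,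
    inner_smul_right_eq_smul, inner_add_right, ContinuousLinearMap.adjoint_inner_right,
    ← inner_conj_symm (T x), re_eq_add_conj, real_smul]
  push_cast
  ring

theorem norm_realPart_le_one (T : H →L[ℂ] H) (hw : ∀ y : H, ‖y‖ = 1 → ‖⟪y, T y⟫_ℂ‖ ≤ 1) :
    ‖(ℜ T : H →L[ℂ] H)‖ ≤ 1 := by
  have hunit (u : H) (hu : ‖u‖ = 1) : |(ℜ T : H →L[ℂ] H).rayleighQuotient u| ≤ 1 := by
    rw [ContinuousLinearMap.rayleighQuotient, ContinuousLinearMap.reApplyInnerSelf_apply, hu,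
      ← inner_conj_symm, RCLike.conj_re, inner_realPart_apply_self]
    simpa using (abs_re_le_norm _).trans (hw u hu)
  rw [ContinuousLinearMap.norm_eq_iSup_rayleighQuotient _ (ℜ T).prop.isSymmetric]
  refine ciSup_le fun y ↦ ?_
  rcases eq_or_ne y 0 with rfl | hy
  · simp
  rw [← ContinuousLinearMap.rayleigh_smul _ y (c := ((‖y‖⁻¹ : ℝ) : ℂ)) (by simpa using hy)]
  exact hunit _ (by simp [norm_smul, hy])

theorem imaginaryPart_eq_neg_realPart_I_smul (T : H →L[ℂ] H) :
    (ℑ T : H →L[ℂ] H) = -(ℜ (I • T) : H →L[ℂ] H) := by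
  rw [realPart_I_smul]
  simp

theorem norm_imaginaryPart_le_one (T : H →L[ℂ] H) (hw : ∀ y : H, ‖y‖ = 1 → ‖⟪y, T y⟫_ℂ‖ ≤ 1) :
    ‖(ℑ T : H →L[ℂ] H)‖ ≤ 1 := by
  rw [imaginaryPart_eq_neg_realPart_I_smul, norm_neg]
  refine norm_realPart_le_one _ fun y hy ↦ ?_
  simpa [inner_smul_right] using hw y hy

theorem inner_imaginaryPart_apply_self (T : H →L[ℂ] H) (x : H) :
    ⟪x, (ℑ T : H →L[ℂ] H) x⟫_ℂ = (⟪x, T x⟫_ℂ).im := by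
  rw [imaginaryPart_eq_neg_realPart_I_smul, neg_apply, inner_neg_right,
    inner_realPart_apply_self, smul_apply, inner_smul_right]
  simp

theorem norm_apply_sq_le_of_inner_apply_self_eq_ofReal (T : H →L[ℂ] H)
    (hw : ∀ y : H, ‖y‖ = 1 → ‖⟪y, T y⟫_ℂ‖ ≤ 1) {x : H} (hx : ‖x‖ ≤ 1) {r : ℝ}
    (hr : ⟪x, T x⟫_ℂ = r) :
    ‖T x‖ ^ 2 ≤ 2 + 2 * √(1 - r ^ 2) := by
  have hnorm {S : H →L[ℂ] H} (hS : ‖S‖ ≤ 1) : ‖S x‖ ≤ 1 :=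
    (S.le_opNorm x).trans (mul_le_one₀ hS (norm_nonneg x) hx)
  rw [← realPart_add_I_smul_imaginaryPart T]
  refine norm_add_I_smul_sq_le (hnorm (norm_realPart_le_one T hw))
    (hnorm (norm_imaginaryPart_le_one T hw)) hx ?_ ?_
  · simp [inner_realPart_apply_self, hr]
  · simp [inner_imaginaryPart_apply_self, hr]

theorem norm_apply_sq_le_of_completeSpace (T : H →L[ℂ] H)
    (hw : ∀ y : H, ‖y‖ = 1 → ‖⟪y, T y⟫_ℂ‖ ≤ 1) {x : H} (hx : ‖x‖ ≤ 1) :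
    ‖T x‖ ^ 2 ≤ 2 + 2 * √(1 - ‖⟪x, T x⟫_ℂ‖ ^ 2) := by
  obtain ⟨c, hc, hcx⟩ := exists_norm_eq_mul_self ⟪x, T x⟫_ℂ
  have hcw (y : H) (hy : ‖y‖ = 1) : ‖⟪y, (c • T) y⟫_ℂ‖ ≤ 1 := by
    simpa [inner_smul_right, hc] using hw y hy
  have := norm_apply_sq_le_of_inner_apply_self_eq_ofReal (c • T) hcw hx
    (by rw [smul_apply, inner_smul_right, hcx])
  simpa [norm_smul, hc] using this

end RealAndImaginaryParts

/-- Theorem 3.1: if `w(T) ≤ 1` and `‖x‖ ≤ 1`, then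
`‖Tx‖² ≤ 2 + 2√(1 - |⟨Tx,x⟩|²)`. -/
theorem stmt6 {H : Type*} [NormedAddCommGroup H] [InnerProductSpace ℂ H]
    (T : H →L[ℂ] H)
    (hw : ∀ y : H, ‖y‖ = 1 → ‖⟪y, T y⟫_ℂ‖ ≤ 1)
    (x : H) (hx : ‖x‖ ≤ 1) :
    ‖T x‖ ^ 2 ≤ 2 + 2 * Real.sqrt (1 - ‖⟪x, T x⟫_ℂ‖ ^ 2) := by
  set K := Submodule.span ℂ {x, T x}
  have : FiniteDimensional ℂ K := FiniteDimensional.span_of_finite ℂ (Set.toFinite _)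
  have hxK : x ∈ K := Submodule.subset_span (by simp)
  have hTxK : T x ∈ K := Submodule.subset_span (by simp)
  have hS := norm_apply_sq_le_of_completeSpace (compression K T)
    (fun y hy ↦ by rw [inner_compression_apply]; exact hw y hy) (x := ⟨x, hxK⟩) hx
  rwa [← K.norm_coe, coe_compression_apply_of_mem K T hTxK, inner_compression_apply] at hS
end

section
/- Let t, s ∈ ℝ with 0 ≤ t ≤ 1/2 and s < t² - 1/4. Then there exists an operator T with w(T) ≤ 1 (namely the 2×2 matrix with entries T₁₁=T₂₁=T₂₂=0, T₁₂=2) such that I + t(T+T*) + s T*T is not positive semidefinite. -/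
open scoped Matrix ComplexOrder

/-!
For `T = !![0, c; 0, 0]` one has `x* T x = c · conj(x₀) x₁`, so AM-GM gives `w(T) ≤ |c| / 2`,
while `I + t(T + T*) + s T*T = !![1, t c; t c̄, 1 + s|c|²]` has determinant
`1 + (s - t²)|c|²`. For `c = 2` this is `1 + 4s - 4t² < 0`, which rules out positive
semidefiniteness since the determinant of a positive semidefinite matrix is nonnegative.
-/

namespace Matrix

lemma star_dotProduct_mulVec_fin_two_upper (c : ℂ) (x : Fin 2 → ℂ) :
    star x ⬝ᵥ !![0, c; 0, 0] *ᵥ x = star (x 0) * c * x 1 := by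
  simp [dotProduct, mulVec, Fin.sum_univ_two, mul_assoc]

lemma re_star_dotProduct_self_fin_two (x : Fin 2 → ℂ) :
    (star x ⬝ᵥ x).re = ‖x 0‖ ^ 2 + ‖x 1‖ ^ 2 := by
  simp [dotProduct, Fin.sum_univ_two, Complex.mul_re, Complex.sq_norm, Complex.normSq_apply]

lemma norm_star_dotProduct_mulVec_fin_two_upper_le (c : ℂ) (x : Fin 2 → ℂ) :
    ‖star x ⬝ᵥ !![0, c; 0, 0] *ᵥ x‖ ≤ ‖c‖ / 2 * (star x ⬝ᵥ x).re := by
  rw [star_dotProduct_mulVec_fin_two_upper, re_star_dotProduct_self_fin_two]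
  have h := two_mul_le_add_sq ‖x 0‖ ‖x 1‖
  calc
    ‖star (x 0) * c * x 1‖ = ‖c‖ / 2 * (2 * ‖x 0‖ * ‖x 1‖) := by
      rw [norm_mul, norm_mul, RCLike.star_def, RCLike.norm_conj]; ring
    _ ≤ ‖c‖ / 2 * (‖x 0‖ ^ 2 + ‖x 1‖ ^ 2) := by gcongr

lemma det_one_add_smul_add_conjTranspose_add_smul_conjTranspose_mul_fin_two_upper
    (c : ℂ) (t s : ℝ) :
    ((1 : Matrix (Fin 2) (Fin 2) ℂ) + (t : ℂ) • (!![0, c; 0, 0] + (!![0, c; 0, 0])ᴴ)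
        + (s : ℂ) • ((!![0, c; 0, 0])ᴴ * !![0, c; 0, 0])).det
      = ((1 + (s - t ^ 2) * ‖c‖ ^ 2 : ℝ) : ℂ) := by
  simp [det_fin_two, conjTranspose_apply, mul_apply, Fin.sum_univ_two,
    ← Complex.normSq_eq_conj_mul_self, Complex.normSq_eq_norm_sq]
  linear_combination (-(t : ℂ) ^ 2) * Complex.mul_conj' c

end Matrix

theorem stmt12_general (t s : ℝ) (hs : s < t ^ 2 - 1 / 4) :
    ∃ T : Matrix (Fin 2) (Fin 2) ℂ,
      (∀ x : Fin 2 → ℂ, star x ⬝ᵥ x = 1 → ‖star x ⬝ᵥ T.mulVec x‖ ≤ 1) ∧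
      T = !![0, 2; 0, 0] ∧
      ¬ ((1 : Matrix (Fin 2) (Fin 2) ℂ) + (t : ℂ) • (T + Tᴴ) + (s : ℂ) • (Tᴴ * T)).PosSemidef := by
  refine ⟨!![0, 2; 0, 0], fun x hx => ?_, rfl, fun hpsd => ?_⟩
  · simpa [hx] using Matrix.norm_star_dotProduct_mulVec_fin_two_upper_le 2 x
  · have hdet := hpsd.det_nonneg
    rw [Matrix.det_one_add_smul_add_conjTranspose_add_smul_conjTranspose_mul_fin_two_upper,
      Complex.zero_le_real] at hdet
    norm_num at hdet
    linarith

/-- Sharpness in Case 1 of Theorem 4.3: for `0 ≤ t ≤ 1/2` and `s < t² - 1/4`, the matrix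
`T = [[0,2],[0,0]]` has numerical radius at most `1` but `I + t(T+T*) + sT*T` is not
positive semidefinite. -/
theorem stmt12 (t s : ℝ) (ht0 : 0 ≤ t) (ht : t ≤ 1 / 2) (hs : s < t ^ 2 - 1 / 4) :
    ∃ T : Matrix (Fin 2) (Fin 2) ℂ,
      (∀ x : Fin 2 → ℂ, star x ⬝ᵥ x = 1 → ‖star x ⬝ᵥ T.mulVec x‖ ≤ 1) ∧
      T = !![0, 2; 0, 0] ∧
      ¬ ((1 : Matrix (Fin 2) (Fin 2) ℂ) + (t : ℂ) • (T + Tᴴ) + (s : ℂ) • (Tᴴ * T)).PosSemidef :=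
  stmt12_general t s hs
end

section
/- Let T be a bounded operator on a complex Hilbert space with W(T) contained in the closed unit disk, let α ∈ [0,1), and let φ_α(z) = (α+z)/(1+αz). Then for every θ with cos θ ≤ α, Re(e^{-iθ} φ_α(T)) ≤ I, where φ_α(T) = (αI + T)(I + αT)^{-1}. -/
open scoped InnerProductSpace ComplexConjugate

/-! With `B = 1 + αT`, the numerical radius bound gives `(1 - α)‖x‖² ≤ re ⟪B x, x⟫`, so `B` is
invertible and every vector is of the form `B y`, with `φ_α(T) (B y) = αy + Ty`. For `|c| = 1`,
the defect `‖B y‖² - re ⟪c (αy + Ty), B y⟫` equals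
`a‖y‖² + d‖Ty‖² - re (c (1 - α c̄)² ⟪y, Ty⟫)` where `a = 1 - α re c`, `d = α (α - re c)` and
`|c (1 - α c̄)²| = a + d`. When `re c ≤ α` we have `0 ≤ d ≤ a`, and since `|⟪y, Ty⟫|` is bounded
by both `‖y‖²` and `‖y‖ ‖Ty‖`, AM–GM gives `(a + d) |⟪y, Ty⟫| ≤ a‖y‖² + d‖Ty‖²`. -/

lemma add_mul_le_mul_add_mul_of_sq_le {a d r s t : ℝ} (hd : 0 ≤ d) (hda : d ≤ a)
    (ht : 0 ≤ t) (hrs : r ≤ s) (hrst : r ^ 2 ≤ s * t) : (a + d) * r ≤ a * s + d * t := by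
  have h2r : 2 * r ≤ s + t := by nlinarith [sq_nonneg (s - t)]
  nlinarith [mul_le_mul_of_nonneg_left h2r hd, mul_le_mul_of_nonneg_left hrs (sub_nonneg.2 hda)]

section InnerProductSpace

variable {𝕜 E : Type*} [RCLike 𝕜] [NormedAddCommGroup E] [InnerProductSpace 𝕜 E]

open RCLike

lemma norm_inner_map_self_le_sq_norm {T : E →L[𝕜] E}
    (hT : ∀ x : E, ‖x‖ = 1 → ‖⟪x, T x⟫_𝕜‖ ≤ 1) (x : E) : ‖⟪x, T x⟫_𝕜‖ ≤ ‖x‖ ^ 2 := by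
  rcases eq_or_ne x 0 with rfl | hx
  · simp
  set u := (‖x‖⁻¹ : 𝕜) • x
  have hxu : (‖x‖ : 𝕜) • u = x := smul_inv_smul₀ (ofReal_ne_zero.2 (norm_ne_zero_iff.2 hx)) x
  calc ‖⟪x, T x⟫_𝕜‖ = ‖⟪(‖x‖ : 𝕜) • u, T ((‖x‖ : 𝕜) • u)⟫_𝕜‖ := by rw [hxu]
    _ = ‖x‖ ^ 2 * ‖⟪u, T u⟫_𝕜‖ := by
        rw [map_smul, inner_smul_left, inner_smul_right, norm_mul, norm_mul, norm_conj,
          norm_ofReal, abs_norm]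
        ring
    _ ≤ ‖x‖ ^ 2 := mul_le_of_le_one_right (by positivity) (hT u (norm_smul_inv_norm hx))

lemma isUnit_one_add_smul_of_norm_inner_map_self_le [CompleteSpace E] {T : E →L[𝕜] E}
    (hT : ∀ x : E, ‖⟪x, T x⟫_𝕜‖ ≤ ‖x‖ ^ 2) {α : ℝ} (hα0 : 0 ≤ α) (hα1 : α < 1) :
    IsUnit (1 + (α : 𝕜) • T) := by
  refine ContinuousLinearMap.isUnit_of_forall_le_norm_inner_map _
    (c := ⟨1 - α, by linarith⟩) (by change (0 : ℝ) < 1 - α; linarith) fun x ↦ ?_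
  have hre : -‖x‖ ^ 2 ≤ re ⟪x, T x⟫_𝕜 :=
    (abs_le.1 ((abs_re_le_norm _).trans (hT x))).1
  calc ‖x‖ ^ 2 * (1 - α) ≤ ‖x‖ ^ 2 + α * re ⟪x, T x⟫_𝕜 := by nlinarith
    _ = re ⟪(1 + (α : 𝕜) • T) x, x⟫_𝕜 := by
        simp [inner_add_left, inner_smul_left, inner_re_symm x]
    _ ≤ _ := re_le_norm _

lemma ContinuousLinearMap.isPositive_one_sub_inv_two_smul_add_adjoint [CompleteSpace E]
    {S : E →L[𝕜] E} (hS : ∀ x, re ⟪S x, x⟫_𝕜 ≤ ‖x‖ ^ 2) :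
    (1 - (2 : 𝕜)⁻¹ • (S + adjoint S)).IsPositive := by
  refine isPositive_def'.2 ⟨?_, fun x ↦ ?_⟩
  · refine (IsSelfAdjoint.one _).sub ((IsSelfAdjoint.ofNat 2).inv₀.smul ?_)
    rw [← star_eq_adjoint]
    exact IsSelfAdjoint.add_star_self _
  · have h2 : (2 : 𝕜)⁻¹ = ((2⁻¹ : ℝ) : 𝕜) := by rw [ofReal_inv, ofReal_ofNat]
    simp only [reApplyInnerSelf_apply, sub_apply, one_apply_eq_self, smul_apply, add_apply,
      inner_sub_left, inner_smul_left, inner_add_left, adjoint_inner_left, h2, conj_ofReal,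
      map_sub, re_ofReal_mul, map_add, inner_re_symm x (S x), inner_self_eq_norm_sq]
    linarith [hS x]

lemma re_inner_smul_add_le_sq_norm {T : E →L[𝕜] E} (hT : ∀ x, ‖⟪x, T x⟫_𝕜‖ ≤ ‖x‖ ^ 2)
    {α : ℝ} (hα0 : 0 ≤ α) (hα1 : α ≤ 1) {c : 𝕜} (hc : ‖c‖ = 1) (hcα : re c ≤ α) (y : E) :
    re ⟪c • ((α : 𝕜) • y + T y), y + (α : 𝕜) • T y⟫_𝕜 ≤ ‖y + (α : 𝕜) • T y‖ ^ 2 := by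
  have hc2 : re c ^ 2 + im c ^ 2 = 1 := by
    have := normSq_eq_def' c
    rw [hc, normSq_apply] at this
    linear_combination this
  set w := ⟪y, T y⟫_𝕜
  have hnorm : ‖y + (α : 𝕜) • T y‖ ^ 2 = ‖y‖ ^ 2 + 2 * α * re w + α ^ 2 * ‖T y‖ ^ 2 := by
    rw [@norm_add_sq 𝕜, inner_smul_right, norm_smul, norm_ofReal, abs_of_nonneg hα0,
      re_ofReal_mul]
    ring
  have hinner : ⟪c • ((α : 𝕜) • y + T y), y + (α : 𝕜) • T y⟫_𝕜
      = conj c * (α * (‖y‖ ^ 2 + ‖T y‖ ^ 2) + α ^ 2 * w + conj w) := by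
    simp only [inner_smul_left, inner_add_left, inner_add_right, inner_smul_right,
      inner_self_eq_norm_sq_to_K, conj_ofReal, ← inner_conj_symm (T y) y]
    ring
  have hdefect : re (conj c * (α * (‖y‖ ^ 2 + ‖T y‖ ^ 2) + α ^ 2 * w + conj w))
      = ‖y‖ ^ 2 + 2 * α * re w + α ^ 2 * ‖T y‖ ^ 2
        - ((1 - α * re c) * ‖y‖ ^ 2 + α * (α - re c) * ‖T y‖ ^ 2)
        + re (c * (1 - α * conj c) ^ 2 * w) := by
    simp only [mul_re, mul_im, map_add, map_sub, conj_re, conj_im, ofReal_re, ofReal_im, sq,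
      one_re, one_im]
    linear_combination (2 * α * re w - α ^ 2 * (re c * re w + im c * im w)) * hc2
  have hcoeff : ‖c * (1 - α * conj c) ^ 2‖ = (1 - α * re c) + α * (α - re c) := by
    rw [norm_mul, hc, one_mul, norm_pow, ← normSq_eq_def', normSq_apply]
    simp only [map_sub, mul_re, mul_im, conj_re, conj_im, ofReal_re, ofReal_im, one_re, one_im]
    linear_combination α ^ 2 * hc2
  have hbound : re (c * (1 - α * conj c) ^ 2 * w)
      ≤ (1 - α * re c) * ‖y‖ ^ 2 + α * (α - re c) * ‖T y‖ ^ 2 :=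
    calc re (c * (1 - α * conj c) ^ 2 * w) ≤ ‖c * (1 - α * conj c) ^ 2 * w‖ := re_le_norm _
      _ = ((1 - α * re c) + α * (α - re c)) * ‖w‖ := by rw [norm_mul, hcoeff]
      _ ≤ (1 - α * re c) * ‖y‖ ^ 2 + α * (α - re c) * ‖T y‖ ^ 2 := by
          refine add_mul_le_mul_add_mul_of_sq_le (by nlinarith) (by nlinarith) (by positivity)
            (hT y) ?_
          rw [← mul_pow]
          exact pow_le_pow_left₀ (norm_nonneg _) (norm_inner_le_norm _ _) 2
  rw [hinner, hdefect, hnorm]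
  linarith

end InnerProductSpace

/-- Inequality (4.1) in Drury's teardrop theorem: if `W(T)` lies in the closed unit disk,
`α ∈ [0,1)` and `φ_α(T) = (αI + T)(I + αT)⁻¹`, then for every `θ` with `cos θ ≤ α`,
`Re(e^{-iθ} φ_α(T)) ≤ I`. -/
theorem stmt15 {H : Type*} [NormedAddCommGroup H] [InnerProductSpace ℂ H] [CompleteSpace H]
    (T : H →L[ℂ] H)
    (hW : ∀ x : H, ‖x‖ = 1 → ‖⟪x, T x⟫_ℂ‖ ≤ 1)
    (α : ℝ) (hα0 : 0 ≤ α) (hα1 : α < 1)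
    (φT : H →L[ℂ] H)
    (hφT : φT = ((α : ℂ) • (1 : H →L[ℂ] H) + T) *
        Ring.inverse ((1 : H →L[ℂ] H) + (α : ℂ) • T)) :
    ∀ θ : ℝ, Real.cos θ ≤ α →
      ((1 : H →L[ℂ] H) - (2 : ℂ)⁻¹ •
          (Complex.exp (-(θ : ℂ) * Complex.I) • φT +
            ContinuousLinearMap.adjoint (Complex.exp (-(θ : ℂ) * Complex.I) • φT))).IsPositive := by
  have hT := norm_inner_map_self_le_sq_norm hW
  have hB : IsUnit (1 + (α : ℂ) • T) := isUnit_one_add_smul_of_norm_inner_map_self_le hT hα0 hα1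
  have hφB : ∀ y, φT ((1 + (α : ℂ) • T) y) = (α : ℂ) • y + T y := fun y ↦ by
    rw [hφT, mul_apply_eq_comp, ← mul_apply_eq_comp (Ring.inverse _),
      Ring.inverse_mul_cancel _ hB, one_apply_eq_self]
    simp
  intro θ hθ
  rw [show -(θ : ℂ) * Complex.I = ((-θ : ℝ) : ℂ) * Complex.I by push_cast; ring]
  refine ContinuousLinearMap.isPositive_one_sub_inv_two_smul_add_adjoint fun x ↦ ?_
  obtain ⟨y, rfl⟩ := (ContinuousLinearMap.isUnit_iff_bijective.1 hB).2 x
  rw [smul_apply, hφB]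
  refine re_inner_smul_add_le_sq_norm hT hα0 hα1.le (Complex.norm_exp_ofReal_mul_I _) ?_ y
  rwa [RCLike.re_to_complex, Complex.exp_ofReal_mul_I_re, Real.cos_neg]
end

section
/- If the 2×2 complex matrix [[a,b],[c,d]] has numerical radius at most 1, then |c| ≤ 1 + √(1 - |a|²). -/
/-! Test the numerical range on the unit vectors `x = (t, s u)` with `t, s` real and `|u| = 1`.
After a rotation by a unimodular `ζ`, the real part of `⟨Mx, x⟩` is the real binary quadratic form
`(Re ζa) t² + (Re ζd) s² + p t s` with `p = Re ζ(b u + c ū)`, whose values on the unit circle lie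
in `[-1, 1]`. The discriminants of the nonnegative forms `t² + s² ∓ (that form)` give
`p² ≤ 4 (1 ∓ Re ζa)(1 ∓ Re ζd)`, and a weighted sum of the two eliminates `d`:
`p² ≤ 4 (1 - (Re ζa)²)`. Choosing `ζ` with `ζa = |a|` and `u` with `ζ c ū = |c|` gives
`|c| + β ≤ 2 √(1 - |a|²)`, where `β = Re ζbu`; replacing `ζ, u` by `iζ, iu` makes `ζa` imaginary,
flips the sign of `β`, and gives `|c| - β ≤ 2`. -/

open scoped Matrix ComplexConjugate

theorem abs_quadratic_le_of_unit_circle {α δ p : ℝ}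
    (h : ∀ t s : ℝ, t ^ 2 + s ^ 2 = 1 → |α * t ^ 2 + δ * s ^ 2 + p * (t * s)| ≤ 1) (t : ℝ) :
    |α * t ^ 2 + δ + p * t| ≤ t ^ 2 + 1 := by
  have hn : 0 < t ^ 2 + 1 := by positivity
  set r := √(t ^ 2 + 1)
  have hr : r ^ 2 = t ^ 2 + 1 := Real.sq_sqrt hn.le
  have hr0 : r ≠ 0 := by positivity
  have := h (t / r) (1 / r) (by field_simp; linarith)
  rwa [show α * (t / r) ^ 2 + δ * (1 / r) ^ 2 + p * (t / r * (1 / r))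
      = (α * t ^ 2 + δ + p * t) / (t ^ 2 + 1) by rw [← hr]; field_simp,
    abs_div, abs_of_pos hn, div_le_one hn] at this

theorem sq_le_of_abs_quadratic_le_one {α δ p : ℝ}
    (h : ∀ t s : ℝ, t ^ 2 + s ^ 2 = 1 → |α * t ^ 2 + δ * s ^ 2 + p * (t * s)| ≤ 1) :
    p ^ 2 ≤ 4 * (1 - α ^ 2) := by
  obtain ⟨hα₁, hα₂⟩ := abs_le.mp (by simpa using h 1 0 (by norm_num) : |α| ≤ 1)
  have hbound t := abs_le.mp (abs_quadratic_le_of_unit_circle h t)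
  have hminus : p ^ 2 ≤ 4 * (1 - α) * (1 - δ) := by
    have := discrim_le_zero (a := 1 - α) (b := -p) (c := 1 - δ) fun t => by
      linarith [(hbound t).2]
    rw [discrim] at this; linarith
  have hplus : p ^ 2 ≤ 4 * (1 + α) * (1 + δ) := by
    have := discrim_le_zero (a := 1 + α) (b := p) (c := 1 + δ) fun t => by
      linarith [(hbound t).1]
    rw [discrim] at this; linarith
  nlinarith [mul_le_mul_of_nonneg_left hminus (by linarith : 0 ≤ 1 + α),
    mul_le_mul_of_nonneg_left hplus (by linarith : 0 ≤ 1 - α)]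

theorem Complex.exists_norm_eq_one_mul_eq_norm (z : ℂ) : ∃ ζ : ℂ, ‖ζ‖ = 1 ∧ ζ * z = ‖z‖ := by
  refine ⟨exp (-(arg z : ℂ) * I), by simpa using norm_exp_ofReal_mul_I (-arg z), ?_⟩
  conv_lhs => rw [← norm_mul_exp_arg_mul_I z]
  rw [mul_left_comm, ← exp_add]
  simp

theorem star_dotProduct_mulVec_fin_two (a b c d u : ℂ) (hu : ‖u‖ = 1) (t s : ℝ) :
    star ![(t : ℂ), s * u] ⬝ᵥ !![a, b; c, d] *ᵥ ![(t : ℂ), s * u]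
      = a * t ^ 2 + d * s ^ 2 + (b * u + c * conj u) * (t * s) := by
  have hu' : conj u * u = 1 := by
    rw [← Complex.normSq_eq_conj_mul_self, Complex.normSq_eq_norm_sq, hu]; norm_num
  simp only [dotProduct, Pi.star_apply, RCLike.star_def, Matrix.mulVec, Matrix.of_apply,
    Matrix.cons_val', Matrix.cons_val_fin_one, Fin.sum_univ_two, Matrix.cons_val_zero,
    Matrix.cons_val_one, Complex.conj_ofReal, map_mul]
  linear_combination (d * s ^ 2) * hu'

section NumericalRadius

variable {a b c d : ℂ}
  (hw : ∀ x : Fin 2 → ℂ, star x ⬝ᵥ x = 1 → ‖star x ⬝ᵥ (!![a, b; c, d]).mulVec x‖ ≤ 1)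
include hw

theorem sq_re_rotate_offDiag_le (ζ u : ℂ) (hζ : ‖ζ‖ = 1) (hu : ‖u‖ = 1) :
    (ζ * (b * u + c * conj u)).re ^ 2 ≤ 4 * (1 - (ζ * a).re ^ 2) := by
  refine sq_le_of_abs_quadratic_le_one (δ := (ζ * d).re) fun t s hts => ?_
  have hx : star ![(t : ℂ), s * u] ⬝ᵥ ![(t : ℂ), s * u] = 1 := by
    have := star_dotProduct_mulVec_fin_two 1 0 0 1 u hu t s
    rw [← Matrix.one_fin_two, Matrix.one_mulVec] at this
    rw [this]
    simpa using congrArg ((↑) : ℝ → ℂ) hts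
  calc |(ζ * a).re * t ^ 2 + (ζ * d).re * s ^ 2 + (ζ * (b * u + c * conj u)).re * (t * s)|
      = |(ζ * (a * t ^ 2 + d * s ^ 2 + (b * u + c * conj u) * (t * s))).re| := by
        simp only [mul_add, Complex.add_re, ← Complex.ofReal_pow, ← Complex.ofReal_mul,
          ← mul_assoc, Complex.re_mul_ofReal]
    _ ≤ ‖ζ * (a * t ^ 2 + d * s ^ 2 + (b * u + c * conj u) * (t * s))‖ :=
        Complex.abs_re_le_norm _
    _ ≤ 1 := by
        rw [norm_mul, hζ, one_mul, ← star_dotProduct_mulVec_fin_two a b c d u hu t s]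
        exact hw _ hx

end NumericalRadius

/-- If the 2×2 matrix `[[a,b],[c,d]]` has numerical radius at most 1, then
`|c| ≤ 1 + √(1 - |a|²)`. -/
theorem stmt19 (a b c d : ℂ)
    (hw : ∀ x : Fin 2 → ℂ, star x ⬝ᵥ x = 1 →
      ‖star x ⬝ᵥ (!![a, b; c, d]).mulVec x‖ ≤ 1) :
    ‖c‖ ≤ 1 + Real.sqrt (1 - ‖a‖ ^ 2) := by
  obtain ⟨ζ, hζ, hζa⟩ := Complex.exists_norm_eq_one_mul_eq_norm a
  obtain ⟨η, hη, hηc⟩ := Complex.exists_norm_eq_one_mul_eq_norm (ζ * c)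
  rw [norm_mul, hζ, one_mul] at hηc
  have hplus : ((ζ * b * conj η).re + ‖c‖) ^ 2 ≤ 4 * (1 - ‖a‖ ^ 2) := by
    have := sq_re_rotate_offDiag_le hw ζ (conj η) hζ (by rwa [Complex.norm_conj])
    rwa [Complex.conj_conj, hζa, show ζ * (b * conj η + c * η) = ζ * b * conj η + ‖c‖ by
      linear_combination hηc, Complex.add_re, Complex.ofReal_re, Complex.ofReal_re] at this
  have hminus : (‖c‖ - (ζ * b * conj η).re) ^ 2 ≤ 4 := by
    have := sq_re_rotate_offDiag_le hw (Complex.I * ζ) (Complex.I * conj η)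
      (by simp [hζ]) (by simp [hη])
    rwa [map_mul, Complex.conj_I, Complex.conj_conj, mul_assoc Complex.I ζ a, hζa,
      show Complex.I * ζ * (b * (Complex.I * conj η) + c * (-Complex.I * η))
        = ‖c‖ - ζ * b * conj η by
        linear_combination (ζ * b * conj η - ζ * c * η) * Complex.I_sq + hηc,
      Complex.sub_re, Complex.ofReal_re, Complex.I_mul_re, Complex.ofReal_im, neg_zero,
      sq (0 : ℝ), mul_zero, sub_zero, mul_one] at this
  have hsum : (ζ * b * conj η).re + ‖c‖ ≤ 2 * √(1 - ‖a‖ ^ 2) := by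
    rw [← abs_two, ← Real.sqrt_sq_eq_abs, ← Real.sqrt_mul (sq_nonneg 2)]
    exact Real.le_sqrt_of_sq_le (by linarith)
  nlinarith
end
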